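/- arXiv:2404.07373 — 5 statements merged into one kernel-verified Lean document; each statement's English description precedes it below -/
import Mathlib

section
/- Suppose the matrices A ∈ ℝ^{n×n}, B_w ∈ ℝ^{n×n_w}, B_d ∈ ℝ^{n×n_d}, C_v ∈ ℝ^{n_v×n}, D_vw ∈ ℝ^{n_v×n_w}, D_vd ∈ ℝ^{n_v×n_d}, C_e ∈ ℝ^{n_e×n}, D_ew ∈ ℝ^{n_e×n_w}, D_ed ∈ ℝ^{n_e×n_d}, a symmetric positive semidefinite P ∈ ℝ^{n×n}, a scalar λ ≥ 0, a symmetric M, and a symmetric X satisfy the dissipativity LMI condition. Then for every admissible trajectory (x, w, d, v, e) of the linear system whose uncertainty signals satisfy the static integral quadratic constraint defined by M, and for every T ≥ 0, one has x(T)ᵀ P x(T) − x(0)ᵀ P x(0) ≤ ∫₀ᵀ [d(t); e(t)]ᵀ X [d(t); e(t)] dt. In other words, the system is dissipative with respect to the quadratic supply rate s(d, e) = [d; e]ᵀ X [d; e] with quadratic storage function S(x) = xᵀ P x. -/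
open Matrix

/-- Negative semidefiniteness of a real matrix: `zᵀ N z ≤ 0` for all `z`. -/
def IsNegSemidef {m : Type*} [Fintype m] (N : Matrix m m ℝ) : Prop :=
  ∀ z : m → ℝ, z ⬝ᵥ N *ᵥ z ≤ 0

/-- The dissipativity LMI condition
`[[AᵀP + PA, P Bw, P Bd], [Bwᵀ P, 0, 0], [Bdᵀ P, 0, 0]] + λ Hᵀ M H − Gᵀ X G ⪯ 0` with
`H = [[Cv, Dvw, Dvd], [0, I, 0]]` and `G = [[0, 0, I], [Ce, Dew, Ded]]`. -/
def DissLMI {ιn ιw ιd ιv ιe : Type*} [Fintype ιn] [Fintype ιw] [Fintype ιd]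
    [Fintype ιv] [Fintype ιe] [DecidableEq ιw] [DecidableEq ιd]
    (A : Matrix ιn ιn ℝ) (Bw : Matrix ιn ιw ℝ) (Bd : Matrix ιn ιd ℝ)
    (Cv : Matrix ιv ιn ℝ) (Dvw : Matrix ιv ιw ℝ) (Dvd : Matrix ιv ιd ℝ)
    (Ce : Matrix ιe ιn ℝ) (Dew : Matrix ιe ιw ℝ) (Ded : Matrix ιe ιd ℝ)
    (P : Matrix ιn ιn ℝ) (lam : ℝ)
    (M : Matrix (ιv ⊕ ιw) (ιv ⊕ ιw) ℝ)
    (X : Matrix (ιd ⊕ ιe) (ιd ⊕ ιe) ℝ) : Prop :=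
  let H : Matrix (ιv ⊕ ιw) (ιn ⊕ (ιw ⊕ ιd)) ℝ :=
    fromBlocks Cv (fromCols Dvw Dvd) 0 (fromCols 1 0)
  let G : Matrix (ιd ⊕ ιe) (ιn ⊕ (ιw ⊕ ιd)) ℝ :=
    fromBlocks 0 (fromCols 0 1) Ce (fromCols Dew Ded)
  let F0 : Matrix (ιn ⊕ (ιw ⊕ ιd)) (ιn ⊕ (ιw ⊕ ιd)) ℝ :=
    fromBlocks (Aᵀ * P + P * A) (fromCols (P * Bw) (P * Bd))
      (fromRows (Bwᵀ * P) (Bdᵀ * P)) 0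
  IsNegSemidef (F0 + lam • (Hᵀ * M * H) - Gᵀ * X * G)

/-!
Evaluating the quadratic form of the LMI at `z = (x(t), w(t), d(t))` turns the LMI into the
pointwise inequality `d/dt (xᵀ P x) + λ [v; w]ᵀ M [v; w] ≤ [d; e]ᵀ X [d; e]` along every
trajectory. Integrating over `[0, T]` and dropping the term `λ ∫ [v; w]ᵀ M [v; w]`, which the
IQC makes nonnegative, gives the dissipation inequality.
-/

section Continuity

variable {X R : Type*} [TopologicalSpace X] [TopologicalSpace R] {s : Set X}

@[fun_prop]
theorem ContinuousOn.fun_sumElim {ι κ : Type*} {f : X → ι → R} {g : X → κ → R}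
    (hf : ContinuousOn f s) (hg : ContinuousOn g s) :
    ContinuousOn (fun y => Sum.elim (f y) (g y)) s :=
  Homeomorph.sumArrowHomeomorphProdArrow.symm.continuous.comp_continuousOn (hf.prodMk hg)

variable [NonUnitalNonAssocSemiring R] [ContinuousAdd R] [ContinuousMul R]

@[fun_prop]
theorem ContinuousOn.dotProduct {ι : Type*} [Fintype ι] {f g : X → ι → R}
    (hf : ContinuousOn f s) (hg : ContinuousOn g s) : ContinuousOn (fun y => f y ⬝ᵥ g y) s :=
  (continuous_fst.dotProduct continuous_snd).comp_continuousOn (hf.prodMk hg)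

@[fun_prop]
theorem ContinuousOn.matrix_mulVec {κ ι : Type*} [Fintype ι] {N : X → Matrix κ ι R}
    {f : X → ι → R} (hN : ContinuousOn N s) (hf : ContinuousOn f s) :
    ContinuousOn (fun y => N y *ᵥ f y) s :=
  (continuous_fst.matrix_mulVec continuous_snd).comp_continuousOn (hN.prodMk hf)

end Continuity

section Derivatives

variable {𝕜 ι : Type*} [NontriviallyNormedField 𝕜] [Fintype ι] {s : Set 𝕜} {t : 𝕜}

theorem HasDerivWithinAt.dotProduct {f g : 𝕜 → ι → 𝕜} {f' g' : ι → 𝕜}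
    (hf : HasDerivWithinAt f f' s t) (hg : HasDerivWithinAt g g' s t) :
    HasDerivWithinAt (fun τ => f τ ⬝ᵥ g τ) (f' ⬝ᵥ g t + f t ⬝ᵥ g') s t := by
  simp only [_root_.dotProduct, ← Finset.sum_add_distrib]
  exact HasDerivWithinAt.fun_sum fun i _ =>
    (hasDerivWithinAt_pi.1 hf i).mul (hasDerivWithinAt_pi.1 hg i)

theorem HasDerivWithinAt.matrix_mulVec {κ : Type*} (N : Matrix κ ι 𝕜) {f : 𝕜 → ι → 𝕜}
    {f' : ι → 𝕜} (hf : HasDerivWithinAt f f' s t) :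
    HasDerivWithinAt (fun τ => N *ᵥ f τ) (N *ᵥ f') s t :=
  hasDerivWithinAt_pi.2 fun i => by
    simpa [mulVec] using (hasDerivWithinAt_const t s (N i)).dotProduct hf

end Derivatives

theorem dotProduct_transpose_mul_mul_mulVec {m p : Type*} [Fintype m] [Fintype p]
    (H : Matrix m p ℝ) (N : Matrix m m ℝ) (z : p → ℝ) :
    z ⬝ᵥ (Hᵀ * N * H) *ᵥ z = H *ᵥ z ⬝ᵥ N *ᵥ (H *ᵥ z) := by
  rw [← mulVec_mulVec, ← mulVec_mulVec, dotProduct_mulVec, vecMul_transpose]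

section LMI

variable {ιn ιw ιd ιv ιe : Type*} [Fintype ιn] [Fintype ιw] [Fintype ιd]
    [Fintype ιv] [Fintype ιe] [DecidableEq ιw] [DecidableEq ιd]
    {A : Matrix ιn ιn ℝ} {Bw : Matrix ιn ιw ℝ} {Bd : Matrix ιn ιd ℝ}
    {Cv : Matrix ιv ιn ℝ} {Dvw : Matrix ιv ιw ℝ} {Dvd : Matrix ιv ιd ℝ}
    {Ce : Matrix ιe ιn ℝ} {Dew : Matrix ιe ιw ℝ} {Ded : Matrix ιe ιd ℝ}
    {P : Matrix ιn ιn ℝ} {lam : ℝ} {M : Matrix (ιv ⊕ ιw) (ιv ⊕ ιw) ℝ}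
    {X : Matrix (ιd ⊕ ιe) (ιd ⊕ ιe) ℝ}

theorem DissLMI.storage_deriv_add_le_supply (h : DissLMI A Bw Bd Cv Dvw Dvd Ce Dew Ded P lam M X)
    (x : ιn → ℝ) (w : ιw → ℝ) (d : ιd → ℝ) :
    (A *ᵥ x + Bw *ᵥ w + Bd *ᵥ d) ⬝ᵥ P *ᵥ x + x ⬝ᵥ P *ᵥ (A *ᵥ x + Bw *ᵥ w + Bd *ᵥ d) +
        lam * (Sum.elim (Cv *ᵥ x + Dvw *ᵥ w + Dvd *ᵥ d) w ⬝ᵥ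
          M *ᵥ Sum.elim (Cv *ᵥ x + Dvw *ᵥ w + Dvd *ᵥ d) w) ≤
      Sum.elim d (Ce *ᵥ x + Dew *ᵥ w + Ded *ᵥ d) ⬝ᵥ
        X *ᵥ Sum.elim d (Ce *ᵥ x + Dew *ᵥ w + Ded *ᵥ d) := by
  have hz := h (Sum.elim x (Sum.elim w d))
  simp only [sub_mulVec, add_mulVec, smul_mulVec, dotProduct_sub, dotProduct_add,
    dotProduct_smul, dotProduct_transpose_mul_mul_mulVec, smul_eq_mul] at hz
  have hH : fromBlocks Cv (fromCols Dvw Dvd) 0 (fromCols 1 0) *ᵥ Sum.elim x (Sum.elim w d) =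
      Sum.elim (Cv *ᵥ x + Dvw *ᵥ w + Dvd *ᵥ d) w := by
    simp [fromBlocks_mulVec, add_assoc]
  have hG : fromBlocks 0 (fromCols 0 1) Ce (fromCols Dew Ded) *ᵥ Sum.elim x (Sum.elim w d) =
      Sum.elim d (Ce *ᵥ x + Dew *ᵥ w + Ded *ᵥ d) := by
    simp [fromBlocks_mulVec, add_assoc]
  have hF : Sum.elim x (Sum.elim w d) ⬝ᵥ fromBlocks (Aᵀ * P + P * A)
      (fromCols (P * Bw) (P * Bd)) (fromRows (Bwᵀ * P) (Bdᵀ * P)) 0 *ᵥ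
        Sum.elim x (Sum.elim w d) =
      (A *ᵥ x + Bw *ᵥ w + Bd *ᵥ d) ⬝ᵥ P *ᵥ x + x ⬝ᵥ P *ᵥ (A *ᵥ x + Bw *ᵥ w + Bd *ᵥ d) := by
    simp only [fromBlocks_mulVec, fromCols_mulVec_sumElim, fromRows_mulVec, zero_mulVec,
      add_zero, sumElim_dotProduct_sumElim, add_mulVec, ← mulVec_mulVec, dotProduct_add,
      add_dotProduct, mulVec_add, dotProduct_mulVec _ Aᵀ, dotProduct_mulVec _ Bwᵀ,
      dotProduct_mulVec _ Bdᵀ, vecMul_transpose, Sum.elim_comp_inl, Sum.elim_comp_inr]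
    ring
  rw [hH, hG, hF] at hz
  linarith

end LMI

theorem statement1_general {n nw nd nv ne : ℕ}
    (A : Matrix (Fin n) (Fin n) ℝ) (Bw : Matrix (Fin n) (Fin nw) ℝ)
    (Bd : Matrix (Fin n) (Fin nd) ℝ)
    (Cv : Matrix (Fin nv) (Fin n) ℝ) (Dvw : Matrix (Fin nv) (Fin nw) ℝ)
    (Dvd : Matrix (Fin nv) (Fin nd) ℝ)
    (Ce : Matrix (Fin ne) (Fin n) ℝ) (Dew : Matrix (Fin ne) (Fin nw) ℝ)
    (Ded : Matrix (Fin ne) (Fin nd) ℝ)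
    (P : Matrix (Fin n) (Fin n) ℝ) (lam : ℝ)
    (M : Matrix (Fin nv ⊕ Fin nw) (Fin nv ⊕ Fin nw) ℝ)
    (X : Matrix (Fin nd ⊕ Fin ne) (Fin nd ⊕ Fin ne) ℝ)
    (hlam : 0 ≤ lam)
    (hLMI : DissLMI A Bw Bd Cv Dvw Dvd Ce Dew Ded P lam M X)
    (x : ℝ → Fin n → ℝ) (w : ℝ → Fin nw → ℝ) (d : ℝ → Fin nd → ℝ)
    (v : ℝ → Fin nv → ℝ) (e : ℝ → Fin ne → ℝ)
    (hw : ContinuousOn w (Set.Ici 0)) (hd : ContinuousOn d (Set.Ici 0))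
    (hx : ∀ t ∈ Set.Ici (0:ℝ),
      HasDerivWithinAt x (A *ᵥ x t + Bw *ᵥ w t + Bd *ᵥ d t) (Set.Ici 0) t)
    (hv : ∀ t, v t = Cv *ᵥ x t + Dvw *ᵥ w t + Dvd *ᵥ d t)
    (he : ∀ t, e t = Ce *ᵥ x t + Dew *ᵥ w t + Ded *ᵥ d t)
    (hIQC : ∀ T, 0 ≤ T → 0 ≤ ∫ t in (0:ℝ)..T,
      Sum.elim (v t) (w t) ⬝ᵥ M *ᵥ Sum.elim (v t) (w t)) :
    ∀ T, 0 ≤ T →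
      x T ⬝ᵥ P *ᵥ x T - x 0 ⬝ᵥ P *ᵥ x 0 ≤
        ∫ t in (0:ℝ)..T, Sum.elim (d t) (e t) ⬝ᵥ X *ᵥ Sum.elim (d t) (e t) := by
  intro T hT
  obtain rfl : v = fun t => Cv *ᵥ x t + Dvw *ᵥ w t + Dvd *ᵥ d t := funext hv
  obtain rfl : e = fun t => Ce *ᵥ x t + Dew *ᵥ w t + Ded *ᵥ d t := funext he
  set xdot := fun t => A *ᵥ x t + Bw *ᵥ w t + Bd *ᵥ d t
  set q := fun t => Sum.elim (Cv *ᵥ x t + Dvw *ᵥ w t + Dvd *ᵥ d t) (w t) ⬝ᵥ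
    M *ᵥ Sum.elim (Cv *ᵥ x t + Dvw *ᵥ w t + Dvd *ᵥ d t) (w t)
  set s := fun t => Sum.elim (d t) (Ce *ᵥ x t + Dew *ᵥ w t + Ded *ᵥ d t) ⬝ᵥ
    X *ᵥ Sum.elim (d t) (Ce *ᵥ x t + Dew *ᵥ w t + Ded *ᵥ d t)
  have hIcc : Set.Icc 0 T ⊆ Set.Ici 0 := Set.Icc_subset_Ici_self
  have hx_cont : ContinuousOn x (Set.Ici 0) := fun t ht => (hx t ht).continuousWithinAt
  have hq_cont : ContinuousOn q (Set.Icc 0 T) := (by fun_prop : ContinuousOn q _).mono hIcc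
  have hs_cont : ContinuousOn s (Set.Icc 0 T) := (by fun_prop : ContinuousOn s _).mono hIcc
  calc x T ⬝ᵥ P *ᵥ x T - x 0 ⬝ᵥ P *ᵥ x 0 ≤ ∫ t in (0:ℝ)..T, (s t - lam * q t) := by
        refine intervalIntegral.sub_le_integral_of_hasDeriv_right_of_le
          (g' := fun t => xdot t ⬝ᵥ P *ᵥ x t + x t ⬝ᵥ P *ᵥ xdot t) hT
          ((hx_cont.dotProduct (continuousOn_const.matrix_mulVec hx_cont)).mono hIcc)
          (fun t ht => ?_)
          (by fun_prop : ContinuousOn (fun t => s t - lam * q t) _).integrableOn_Icc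
          (fun t _ => by linarith [hLMI.storage_deriv_add_le_supply (x t) (w t) (d t)])
        exact ((hx t ht.1.le).dotProduct ((hx t ht.1.le).matrix_mulVec P)).mono
          (Set.Ioi_subset_Ici ht.1.le)
    _ = (∫ t in (0:ℝ)..T, s t) - lam * ∫ t in (0:ℝ)..T, q t := by
        rw [intervalIntegral.integral_sub (hs_cont.intervalIntegrable_of_Icc hT)
          ((hq_cont.intervalIntegrable_of_Icc hT).const_mul lam),
          intervalIntegral.integral_const_mul]
    _ ≤ ∫ t in (0:ℝ)..T, s t := by linarith [mul_nonneg hlam (hIQC T hT)]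

/-- the dissipativity LMI implies dissipativity of the uncertain LTI
system with respect to the quadratic supply rate `[d;e]ᵀ X [d;e]` with storage
function `xᵀ P x`, for every admissible trajectory satisfying the static IQC. -/
theorem statement1 {n nw nd nv ne : ℕ}
    (A : Matrix (Fin n) (Fin n) ℝ) (Bw : Matrix (Fin n) (Fin nw) ℝ)
    (Bd : Matrix (Fin n) (Fin nd) ℝ)
    (Cv : Matrix (Fin nv) (Fin n) ℝ) (Dvw : Matrix (Fin nv) (Fin nw) ℝ)
    (Dvd : Matrix (Fin nv) (Fin nd) ℝ)
    (Ce : Matrix (Fin ne) (Fin n) ℝ) (Dew : Matrix (Fin ne) (Fin nw) ℝ)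
    (Ded : Matrix (Fin ne) (Fin nd) ℝ)
    (P : Matrix (Fin n) (Fin n) ℝ) (lam : ℝ)
    (M : Matrix (Fin nv ⊕ Fin nw) (Fin nv ⊕ Fin nw) ℝ)
    (X : Matrix (Fin nd ⊕ Fin ne) (Fin nd ⊕ Fin ne) ℝ)
    (hP : P.PosSemidef) (hlam : 0 ≤ lam) (hM : M.IsSymm) (hX : X.IsSymm)
    (hLMI : DissLMI A Bw Bd Cv Dvw Dvd Ce Dew Ded P lam M X)
    (x : ℝ → Fin n → ℝ) (w : ℝ → Fin nw → ℝ) (d : ℝ → Fin nd → ℝ)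
    (v : ℝ → Fin nv → ℝ) (e : ℝ → Fin ne → ℝ)
    (hw : ContinuousOn w (Set.Ici 0)) (hd : ContinuousOn d (Set.Ici 0))
    (hx : ∀ t ∈ Set.Ici (0:ℝ),
      HasDerivWithinAt x (A *ᵥ x t + Bw *ᵥ w t + Bd *ᵥ d t) (Set.Ici 0) t)
    (hv : ∀ t, v t = Cv *ᵥ x t + Dvw *ᵥ w t + Dvd *ᵥ d t)
    (he : ∀ t, e t = Ce *ᵥ x t + Dew *ᵥ w t + Ded *ᵥ d t)
    (hIQC : ∀ T, 0 ≤ T → 0 ≤ ∫ t in (0:ℝ)..T,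
      Sum.elim (v t) (w t) ⬝ᵥ M *ᵥ Sum.elim (v t) (w t)) :
    ∀ T, 0 ≤ T →
      x T ⬝ᵥ P *ᵥ x T - x 0 ⬝ᵥ P *ᵥ x 0 ≤
        ∫ t in (0:ℝ)..T, Sum.elim (d t) (e t) ⬝ᵥ X *ᵥ Sum.elim (d t) (e t) :=
  statement1_general A Bw Bd Cv Dvw Dvd Ce Dew Ded P lam M X hlam hLMI x w d v e hw hd hx hv he hIQC
end

section
/- Let R, S ∈ ℝ^{n×n} be symmetric matrices such that the block matrix [[R, I], [I, S]] is positive definite (which implies R ≻ 0 and S ≻ 0). Then the matrix I − R S is invertible. -/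
open Matrix

/-- If `(1 - A * B) v = 0`, then `fromBlocks A 1 1 B` maps `(B v, -v)` to zero. -/
theorem Matrix.isUnit_one_sub_mul_of_isUnit_fromBlocks {m K : Type*} [Fintype m] [DecidableEq m]
    [Field K] {A B : Matrix m m K} (h : IsUnit (fromBlocks A 1 1 B)) : IsUnit (1 - A * B) := by
  rw [← mulVec_injective_iff_isUnit] at h ⊢
  refine (injective_iff_map_eq_zero (1 - A * B).mulVecLin).mpr fun v hker => ?_
  have hv : A *ᵥ B *ᵥ v = v := by
    rw [mulVecLin_apply, sub_mulVec, one_mulVec, sub_eq_zero, ← mulVec_mulVec] at hker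
    exact hker.symm
  have hblk : fromBlocks A 1 1 B *ᵥ Sum.elim (B *ᵥ v) (-v) = fromBlocks A 1 1 B *ᵥ 0 := by
    simp [fromBlocks_mulVec, hv, mulVec_neg]
  funext i
  simpa using congrFun (h hblk) (Sum.inr i)

theorem statement9_general {n : ℕ} (R S : Matrix (Fin n) (Fin n) ℝ)
    (hblk : (fromBlocks R (1 : Matrix (Fin n) (Fin n) ℝ)
      (1 : Matrix (Fin n) (Fin n) ℝ) S).PosDef) :
    IsUnit (1 - R * S) :=
  isUnit_one_sub_mul_of_isUnit_fromBlocks hblk.isUnit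

/-- if `[[R, I], [I, S]]` is positive definite (with `R`, `S`
symmetric), then `I − R S` is invertible. -/
theorem statement9 {n : ℕ} (R S : Matrix (Fin n) (Fin n) ℝ)
    (hR : R.IsSymm) (hS : S.IsSymm)
    (hblk : (fromBlocks R (1 : Matrix (Fin n) (Fin n) ℝ)
      (1 : Matrix (Fin n) (Fin n) ℝ) S).PosDef) :
    IsUnit (1 - R * S) :=
  statement9_general R S hblk
end

section
/- Let P ∈ ℝ^{2n×2n} be a symmetric invertible matrix, partitioned as P = [[S, U], [Uᵀ, P₂₂]] and P⁻¹ = [[R, V], [Vᵀ, Q₂₂]] with all blocks n×n. Define Y = [[R, I], [Vᵀ, 0]]. Then P Y = [[I, S], [0, Uᵀ]] and Yᵀ P Y = [[R, I], [I, S]]. In particular, if P is positive definite then [[R, I], [I, S]] is positive semidefinite, and it is positive definite whenever Y is invertible. -/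
/-!
The first block column of `P⁻¹` is `[R; Vᵀ]`, so `Y = [P⁻¹ e | e]` with `e = [I; 0]`, and
`P Y = [e | P e] = [[I, S], [0, Uᵀ]]`. Multiplying by `Yᵀ = [[R, V], [I, 0]]` and using
`R S + V Uᵀ = I` (the `(1,1)` block of `P⁻¹ P = I`) gives `Yᵀ P Y = [[R, I], [I, S]]`.
Over `ℝ` we have `Yᵀ = Yᴴ`, so positivity of `P` passes to the congruent matrix `Yᵀ P Y`,
strictly so when `Y` is injective.
-/

open Matrix

namespace Matrix

variable {α m n : Type*} [Fintype m] [Fintype n] [DecidableEq m] [DecidableEq n] [Ring α]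

theorem fromBlocks_mul_fromBlocks_one_zero_of_mul_eq_one
    {A : Matrix n n α} {B : Matrix n m α} {C : Matrix m n α} {D : Matrix m m α}
    {R : Matrix n n α} {V : Matrix n m α} {W : Matrix m n α} {Q : Matrix m m α}
    (h : fromBlocks A B C D * fromBlocks R V W Q = 1) :
    fromBlocks A B C D * fromBlocks R 1 W 0 = fromBlocks 1 A 0 C := by
  rw [fromBlocks_multiply, ← fromBlocks_one] at h
  have h₁₁ : A * R + B * W = 1 := congrArg toBlocks₁₁ h
  have h₂₁ : C * R + D * W = 0 := congrArg toBlocks₂₁ h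
  simp [fromBlocks_multiply, h₁₁, h₂₁]

theorem fromBlocks_transpose_mul_fromBlocks_one_zero_of_mul_eq_one
    {A : Matrix n n α} {B : Matrix n m α} {C : Matrix m n α} {D : Matrix m m α}
    {R : Matrix n n α} {V : Matrix n m α} {W : Matrix m n α} {Q : Matrix m m α} (hR : Rᵀ = R)
    (h : fromBlocks R V W Q * fromBlocks A B C D = 1) :
    (fromBlocks R 1 Vᵀ 0)ᵀ * fromBlocks 1 A 0 C = fromBlocks R 1 1 A := by
  rw [fromBlocks_multiply, ← fromBlocks_one] at h
  have h₁₁ : R * A + V * C = 1 := congrArg toBlocks₁₁ h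
  simp [fromBlocks_transpose, hR, fromBlocks_multiply, h₁₁]

end Matrix

theorem statement10_general {n : ℕ} (S U P22 R V Q22 : Matrix (Fin n) (Fin n) ℝ)
    (hR : R.IsSymm)
    (hInv : fromBlocks S U Uᵀ P22 * fromBlocks R V Vᵀ Q22 = 1) :
    fromBlocks S U Uᵀ P22 * fromBlocks R (1 : Matrix (Fin n) (Fin n) ℝ) Vᵀ 0 =
      fromBlocks 1 S 0 Uᵀ ∧
    (fromBlocks R (1 : Matrix (Fin n) (Fin n) ℝ) Vᵀ 0)ᵀ *
        fromBlocks S U Uᵀ P22 *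
        fromBlocks R (1 : Matrix (Fin n) (Fin n) ℝ) Vᵀ 0 =
      fromBlocks R 1 1 S ∧
    ((fromBlocks S U Uᵀ P22).PosDef →
      (fromBlocks R (1 : Matrix (Fin n) (Fin n) ℝ) 1 S).PosSemidef ∧
      (IsUnit (fromBlocks R (1 : Matrix (Fin n) (Fin n) ℝ) Vᵀ 0) →
        (fromBlocks R (1 : Matrix (Fin n) (Fin n) ℝ) 1 S).PosDef)) := by
  set Y := fromBlocks R (1 : Matrix (Fin n) (Fin n) ℝ) Vᵀ 0
  have hPY := fromBlocks_mul_fromBlocks_one_zero_of_mul_eq_one hInv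
  have hYPY : Yᵀ * fromBlocks S U Uᵀ P22 * Y = fromBlocks R 1 1 S := by
    rw [Matrix.mul_assoc, hPY,
      fromBlocks_transpose_mul_fromBlocks_one_zero_of_mul_eq_one hR.eq (mul_eq_one_comm.mp hInv)]
  have hYH : Yᴴ = Yᵀ := conjTranspose_eq_transpose_of_trivial Y
  refine ⟨hPY, hYPY, fun hP => ⟨?_, fun hY => ?_⟩⟩
  · rw [← hYPY, ← hYH]
    exact hP.posSemidef.conjTranspose_mul_mul_same Y
  · rw [← hYPY, ← hYH]
    exact hP.conjTranspose_mul_mul_same (mulVec_injective_iff_isUnit.mpr hY)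

/-- for a symmetric invertible `P = [[S, U], [Uᵀ, P₂₂]]` with
inverse `P⁻¹ = [[R, V], [Vᵀ, Q₂₂]]` and `Y = [[R, I], [Vᵀ, 0]]`, one has
`P Y = [[I, S], [0, Uᵀ]]` and `Yᵀ P Y = [[R, I], [I, S]]`; moreover if `P ≻ 0`
then `[[R, I], [I, S]] ⪰ 0`, and `[[R, I], [I, S]] ≻ 0` whenever `Y` is
invertible. -/
theorem statement10 {n : ℕ} (S U P22 R V Q22 : Matrix (Fin n) (Fin n) ℝ)
    (hS : S.IsSymm) (hP22 : P22.IsSymm) (hR : R.IsSymm) (hQ22 : Q22.IsSymm)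
    (hInv : fromBlocks S U Uᵀ P22 * fromBlocks R V Vᵀ Q22 = 1) :
    fromBlocks S U Uᵀ P22 * fromBlocks R (1 : Matrix (Fin n) (Fin n) ℝ) Vᵀ 0 =
      fromBlocks 1 S 0 Uᵀ ∧
    (fromBlocks R (1 : Matrix (Fin n) (Fin n) ℝ) Vᵀ 0)ᵀ *
        fromBlocks S U Uᵀ P22 *
        fromBlocks R (1 : Matrix (Fin n) (Fin n) ℝ) Vᵀ 0 =
      fromBlocks R 1 1 S ∧
    ((fromBlocks S U Uᵀ P22).PosDef →
      (fromBlocks R (1 : Matrix (Fin n) (Fin n) ℝ) 1 S).PosSemidef ∧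
      (IsUnit (fromBlocks R (1 : Matrix (Fin n) (Fin n) ℝ) Vᵀ 0) →
        (fromBlocks R (1 : Matrix (Fin n) (Fin n) ℝ) 1 S).PosDef)) :=
  statement10_general S U P22 R V Q22 hR hInv
end

section
/- Let φ : ℝ^{n_φ} → ℝ^{n_φ} be applied elementwise, where each scalar component φ_i : ℝ → ℝ is monotone and slope-restricted in [0, 1], i.e., 0 ≤ (φ_i(a) − φ_i(b))(a − b) ≤ (a − b)² for all a, b ∈ ℝ. Let Λ ∈ ℝ^{n_φ×n_φ} be diagonal with positive diagonal entries and let D ∈ ℝ^{n_φ×n_φ} satisfy Λ D + Dᵀ Λ − 2Λ ≺ 0 (negative definite). Then for every b ∈ ℝ^{n_φ}, there is at most one w ∈ ℝ^{n_φ} satisfying the implicit equation w = φ(D w + b). -/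
/-!
Let `z = w₁ - w₂` be the difference of two solutions. Since `Dz` is the difference of the
arguments fed to `φ`, the slope restriction gives `zᵢ² ≤ zᵢ (Dz)ᵢ` in every coordinate;
weighting by `Λᵢᵢ > 0` and summing shows that the quadratic form of `ΛD + DᵀΛ − 2Λ` is
nonnegative at `z`, which negative definiteness only allows for `z = 0`.
-/

open Matrix

theorem sq_sub_le_mul_sub_of_slope {f : ℝ → ℝ} {a b : ℝ}
    (hmono : 0 ≤ (f a - f b) * (a - b)) (hslope : (f a - f b) * (a - b) ≤ (a - b) ^ 2) :
    (f a - f b) ^ 2 ≤ (f a - f b) * (a - b) := by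
  rcases eq_or_ne a b with rfl | hab
  · simp
  · have hpos : 0 < (a - b) ^ 2 := by positivity
    nlinarith [mul_le_mul_of_nonneg_left hslope hmono]

section QuadraticForm

variable {R n : Type*} [CommRing R] [Fintype n] [DecidableEq n]

theorem dotProduct_diagonal_lyapunov_mulVec (d : n → R) (D : Matrix n n R) (z : n → R) :
    z ⬝ᵥ (diagonal d * D + Dᵀ * diagonal d - (2 : R) • diagonal d) *ᵥ z
      = 2 * ∑ i, d i * (z i * (D *ᵥ z) i - z i ^ 2) := by
  rw [sub_mulVec, add_mulVec, dotProduct_sub, dotProduct_add, ← mulVec_mulVec,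
    ← mulVec_mulVec, smul_mulVec, dotProduct_smul, dotProduct_mulVec z Dᵀ, vecMul_transpose]
  simp only [mulVec_diagonal, dotProduct, smul_eq_mul, Finset.mul_sum,
    ← Finset.sum_add_distrib, ← Finset.sum_sub_distrib]
  exact Finset.sum_congr rfl fun i _ => by ring

theorem dotProduct_diagonal_lyapunov_mulVec_nonneg [LinearOrder R] [IsStrictOrderedRing R]
    {d : n → R} (hd : ∀ i, 0 ≤ d i) (D : Matrix n n R) {z : n → R}
    (hz : ∀ i, z i ^ 2 ≤ z i * (D *ᵥ z) i) :
    0 ≤ z ⬝ᵥ (diagonal d * D + Dᵀ * diagonal d - (2 : R) • diagonal d) *ᵥ z := by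
  rw [dotProduct_diagonal_lyapunov_mulVec]
  exact mul_nonneg zero_le_two <|
    Finset.sum_nonneg fun i _ => mul_nonneg (hd i) (sub_nonneg.mpr (hz i))

end QuadraticForm

/-- well-posedness of the implicit layer. If each scalar
nonlinearity is monotone and slope-restricted in `[0, 1]`, `Λ` is diagonal with
positive entries, and `Λ D + Dᵀ Λ − 2Λ ≺ 0`, then the implicit equation
`w = φ(D w + b)` has at most one solution `w` for every `b`. -/
theorem statement13 {nphi : ℕ} (φ : Fin nphi → ℝ → ℝ)
    (hslope : ∀ i a b, 0 ≤ (φ i a - φ i b) * (a - b) ∧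
      (φ i a - φ i b) * (a - b) ≤ (a - b) ^ 2)
    (Λ D : Matrix (Fin nphi) (Fin nphi) ℝ)
    (hdiag : ∀ i j, i ≠ j → Λ i j = 0) (hpos : ∀ i, 0 < Λ i i)
    (hND : ∀ z : Fin nphi → ℝ, z ≠ 0 →
      z ⬝ᵥ (Λ * D + Dᵀ * Λ - (2:ℝ) • Λ) *ᵥ z < 0)
    (b w₁ w₂ : Fin nphi → ℝ)
    (h₁ : ∀ i, w₁ i = φ i ((D *ᵥ w₁ + b) i))
    (h₂ : ∀ i, w₂ i = φ i ((D *ᵥ w₂ + b) i)) :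
    w₁ = w₂ := by
  by_contra hne
  have hsq : ∀ i, (w₁ - w₂) i ^ 2 ≤ (w₁ - w₂) i * (D *ᵥ (w₁ - w₂)) i := fun i => by
    have hDz : (D *ᵥ (w₁ - w₂)) i = (D *ᵥ w₁ + b) i - (D *ᵥ w₂ + b) i := by
      simp only [mulVec_sub, Pi.sub_apply, Pi.add_apply]; ring
    rw [hDz, Pi.sub_apply, h₁ i, h₂ i]
    exact sq_sub_le_mul_sub_of_slope (hslope i _ _).1 (hslope i _ _).2
  have hΛ : Λ = diagonal (diag Λ) := (IsDiag.diagonal_diag fun i j => hdiag i j).symm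
  have hnonneg := dotProduct_diagonal_lyapunov_mulVec_nonneg (d := diag Λ) (fun i => (hpos i).le) D hsq
  rw [← hΛ] at hnonneg
  exact (hND _ (sub_ne_zero.mpr hne)).not_ge hnonneg
end

section
/- Fix plant matrices A_p, B_pw, B_pd, B_pu, C_pv, D_pvw, D_pvd, D_pvu, C_pe, D_pew, D_ped, D_peu, C_py, D_pyw, D_pyd. The map sending the controller parameter block matrix θ = [[A_k, B_kw, B_ky], [C_kv, D_kvw, D_kvy], [C_ku, D_kuw, D_kuy]] to the closed-loop state-space block matrix [[A, B_w, B_d], [C_v, D_vw, D_vd], [C_e, D_ew, D_ed]] is affine: for all controller parameter matrices θ₁, θ₂ and all t ∈ ℝ, the closed-loop block matrix evaluated at t·θ₁ + (1 − t)·θ₂ equals t times the closed-loop block matrix at θ₁ plus (1 − t) times the closed-loop block matrix at θ₂. -/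
/-!
Each block of the closed-loop matrix is a fixed plant term plus a product in which a single
controller block occurs exactly once. A convex combination of controller parameters therefore
passes through the matrix products, the extraction of blocks from `θ` and the block assembly, and
comes out as the same convex combination of closed-loop matrices.
-/

open Matrix

/-- The closed-loop state-space block matrix
`[[A, B_w, B_d], [C_v, D_vw, D_vd], [C_e, D_ew, D_ed]]` of the feedback
interconnection of the plant with the controller whose parameter block matrix is
`θ = [[A_k, B_kw, B_ky], [C_kv, D_kvw, D_kvy], [C_ku, D_kuw, D_kuy]]`. -/
noncomputable def closedLoopBlock {np nk nwp nphi nd nu nvp ne ny : ℕ}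
    (Ap : Matrix (Fin np) (Fin np) ℝ) (Bpw : Matrix (Fin np) (Fin nwp) ℝ)
    (Bpd : Matrix (Fin np) (Fin nd) ℝ) (Bpu : Matrix (Fin np) (Fin nu) ℝ)
    (Cpv : Matrix (Fin nvp) (Fin np) ℝ) (Dpvw : Matrix (Fin nvp) (Fin nwp) ℝ)
    (Dpvd : Matrix (Fin nvp) (Fin nd) ℝ) (Dpvu : Matrix (Fin nvp) (Fin nu) ℝ)
    (Cpe : Matrix (Fin ne) (Fin np) ℝ) (Dpew : Matrix (Fin ne) (Fin nwp) ℝ)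
    (Dped : Matrix (Fin ne) (Fin nd) ℝ) (Dpeu : Matrix (Fin ne) (Fin nu) ℝ)
    (Cpy : Matrix (Fin ny) (Fin np) ℝ) (Dpyw : Matrix (Fin ny) (Fin nwp) ℝ)
    (Dpyd : Matrix (Fin ny) (Fin nd) ℝ)
    (θ : Matrix (Fin nk ⊕ (Fin nphi ⊕ Fin nu)) (Fin nk ⊕ (Fin nphi ⊕ Fin ny)) ℝ) :
    Matrix ((Fin np ⊕ Fin nk) ⊕ ((Fin nvp ⊕ Fin nphi) ⊕ Fin ne))
      ((Fin np ⊕ Fin nk) ⊕ ((Fin nwp ⊕ Fin nphi) ⊕ Fin nd)) ℝ :=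
  let Ak : Matrix (Fin nk) (Fin nk) ℝ := of fun i j => θ (Sum.inl i) (Sum.inl j)
  let Bkw : Matrix (Fin nk) (Fin nphi) ℝ :=
    of fun i j => θ (Sum.inl i) (Sum.inr (Sum.inl j))
  let Bky : Matrix (Fin nk) (Fin ny) ℝ :=
    of fun i j => θ (Sum.inl i) (Sum.inr (Sum.inr j))
  let Ckv : Matrix (Fin nphi) (Fin nk) ℝ :=
    of fun i j => θ (Sum.inr (Sum.inl i)) (Sum.inl j)
  let Dkvw : Matrix (Fin nphi) (Fin nphi) ℝ :=
    of fun i j => θ (Sum.inr (Sum.inl i)) (Sum.inr (Sum.inl j))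
  let Dkvy : Matrix (Fin nphi) (Fin ny) ℝ :=
    of fun i j => θ (Sum.inr (Sum.inl i)) (Sum.inr (Sum.inr j))
  let Cku : Matrix (Fin nu) (Fin nk) ℝ :=
    of fun i j => θ (Sum.inr (Sum.inr i)) (Sum.inl j)
  let Dkuw : Matrix (Fin nu) (Fin nphi) ℝ :=
    of fun i j => θ (Sum.inr (Sum.inr i)) (Sum.inr (Sum.inl j))
  let Dkuy : Matrix (Fin nu) (Fin ny) ℝ :=
    of fun i j => θ (Sum.inr (Sum.inr i)) (Sum.inr (Sum.inr j))
  let A := fromBlocks (Ap + Bpu * Dkuy * Cpy) (Bpu * Cku) (Bky * Cpy) Ak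
  let Bw := fromBlocks (Bpw + Bpu * Dkuy * Dpyw) (Bpu * Dkuw) (Bky * Dpyw) Bkw
  let Bd := fromRows (Bpd + Bpu * Dkuy * Dpyd) (Bky * Dpyd)
  let Cv := fromBlocks (Cpv + Dpvu * Dkuy * Cpy) (Dpvu * Cku) (Dkvy * Cpy) Ckv
  let Dvw := fromBlocks (Dpvw + Dpvu * Dkuy * Dpyw) (Dpvu * Dkuw)
    (Dkvy * Dpyw) Dkvw
  let Dvd := fromRows (Dpvd + Dpvu * Dkuy * Dpyd) (Dkvy * Dpyd)
  let Ce := fromCols (Cpe + Dpeu * Dkuy * Cpy) (Dpeu * Cku)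
  let Dew := fromCols (Dpew + Dpeu * Dkuy * Dpyw) (Dpeu * Dkuw)
  let Ded := Dped + Dpeu * Dkuy * Dpyd
  fromBlocks A (fromCols Bw Bd) (fromRows Cv Ce) (fromBlocks Dvw Dvd Dew Ded)

namespace Matrix

variable {R α : Type*} {l m n m' n' : Type*}

theorem fromRows_add [Add α] (A : Matrix l n α) (B : Matrix m n α) (A' : Matrix l n α)
    (B' : Matrix m n α) : fromRows A B + fromRows A' B' = fromRows (A + A') (B + B') := by
  ext (i | i) j <;> rfl

theorem fromRows_smul [SMul R α] (x : R) (A : Matrix l n α) (B : Matrix m n α) :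
    x • fromRows A B = fromRows (x • A) (x • B) := by
  ext (i | i) j <;> rfl

theorem fromCols_add [Add α] (A : Matrix n l α) (B : Matrix n m α) (A' : Matrix n l α)
    (B' : Matrix n m α) : fromCols A B + fromCols A' B' = fromCols (A + A') (B + B') := by
  ext i (j | j) <;> rfl

theorem fromCols_smul [SMul R α] (x : R) (A : Matrix n l α) (B : Matrix n m α) :
    x • fromCols A B = fromCols (x • A) (x • B) := by
  ext i (j | j) <;> rfl

theorem of_apply_comp_add [Add α] (M N : Matrix m n α) (f : m' → m) (g : n' → n) :
    (of fun i j => (M + N) (f i) (g j)) =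
      (of fun i j => M (f i) (g j)) + of fun i j => N (f i) (g j) :=
  rfl

theorem of_apply_comp_smul [SMul R α] (x : R) (M : Matrix m n α) (f : m' → m) (g : n' → n) :
    (of fun i j => (x • M) (f i) (g j)) = x • of fun i j => M (f i) (g j) :=
  rfl

end Matrix

theorem add_smul_add_one_sub_smul {R E : Type*} [Ring R] [AddCommGroup E] [Module R E]
    (c x y : E) (t : R) : c + (t • x + (1 - t) • y) = t • (c + x) + (1 - t) • (c + y) := by
  simp only [smul_add, sub_smul, one_smul]
  abel

/-- the map from the controller parameter block matrix `θ` to the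
closed-loop state-space block matrix is affine. -/
theorem statement17 {np nk nwp nphi nd nu nvp ne ny : ℕ}
    (Ap : Matrix (Fin np) (Fin np) ℝ) (Bpw : Matrix (Fin np) (Fin nwp) ℝ)
    (Bpd : Matrix (Fin np) (Fin nd) ℝ) (Bpu : Matrix (Fin np) (Fin nu) ℝ)
    (Cpv : Matrix (Fin nvp) (Fin np) ℝ) (Dpvw : Matrix (Fin nvp) (Fin nwp) ℝ)
    (Dpvd : Matrix (Fin nvp) (Fin nd) ℝ) (Dpvu : Matrix (Fin nvp) (Fin nu) ℝ)
    (Cpe : Matrix (Fin ne) (Fin np) ℝ) (Dpew : Matrix (Fin ne) (Fin nwp) ℝ)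
    (Dped : Matrix (Fin ne) (Fin nd) ℝ) (Dpeu : Matrix (Fin ne) (Fin nu) ℝ)
    (Cpy : Matrix (Fin ny) (Fin np) ℝ) (Dpyw : Matrix (Fin ny) (Fin nwp) ℝ)
    (Dpyd : Matrix (Fin ny) (Fin nd) ℝ) :
    ∀ (θ₁ θ₂ : Matrix (Fin nk ⊕ (Fin nphi ⊕ Fin nu))
        (Fin nk ⊕ (Fin nphi ⊕ Fin ny)) ℝ) (t : ℝ),
      closedLoopBlock Ap Bpw Bpd Bpu Cpv Dpvw Dpvd Dpvu Cpe Dpew Dped Dpeu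
          Cpy Dpyw Dpyd (t • θ₁ + (1 - t) • θ₂) =
        t • closedLoopBlock Ap Bpw Bpd Bpu Cpv Dpvw Dpvd Dpvu Cpe Dpew Dped
            Dpeu Cpy Dpyw Dpyd θ₁ +
          (1 - t) • closedLoopBlock Ap Bpw Bpd Bpu Cpv Dpvw Dpvd Dpvu Cpe Dpew
            Dped Dpeu Cpy Dpyw Dpyd θ₂ := by
  intro θ₁ θ₂ t
  simp only [closedLoopBlock, of_apply_comp_add, of_apply_comp_smul, Matrix.mul_add,
    Matrix.mul_smul, Matrix.add_mul, Matrix.smul_mul, add_smul_add_one_sub_smul,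
    fromBlocks_smul, fromBlocks_add, fromRows_smul, fromRows_add, fromCols_smul, fromCols_add]
end
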